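/- Let f(x,y,a) = y + 4x/a - (2a/(a²+16))(x - 4y/a)² + a(a²+16)/8. There exist a̅ > 0 and r > 0 such that for every (x,y) with 0 < ‖(x,y)‖ < r and x < (1/2)y², there is a unique a ∈ (-a̅, 0) with f(x,y,a) = 0. -/

import Mathlib

/-!
Clearing denominators, `f(x,y,a) = N(a) / D(a)` with `D(a) = a (a² + 16)` and `N` a polynomial
in `a`. Since `N(0) = 64 x - 32 y² < 0` and `D < 0` on `a < 0`, `f` is positive just left of `0`,
while `f(x,y,-1) < 0` for small `(x,y)`. For small `(x,y)` the numerator `N' D - N D'` of `∂f/∂a`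
is positive, so `f` is strictly increasing on `[-1, 0)` and the intermediate value theorem gives
exactly one zero with `a̅ = 1`, `r = 1/100`.
-/

/-- The defining function `f` of the level parabolas. -/
noncomputable def fullerf (x y a : ℝ) : ℝ :=
  y + 4 * x / a - (2 * a / (a ^ 2 + 16)) * (x - 4 * y / a) ^ 2 + a * (a ^ 2 + 16) / 8

open Set Filter Topology

theorem existsUnique_mem_Ioo_eq_zero {g : ℝ → ℝ} {l u : ℝ} (hlu : l < u)
    (hcont : ContinuousOn g (Ico l u)) (hmono : StrictMonoOn g (Ico l u)) (hl : g l < 0)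
    (hu : ∀ᶠ a in 𝓝[<] u, 0 < g a) : ∃! a, a ∈ Ioo l u ∧ g a = 0 := by
  obtain ⟨b, hgb, hb⟩ := (hu.and (Ioo_mem_nhdsLT hlu)).exists
  obtain ⟨c, hc, hgc⟩ :=
    intermediate_value_Ioo hb.1.le (hcont.mono (Icc_subset_Ico_right hb.2)) ⟨hl, hgb⟩
  have hcu : c ∈ Ioo l u := ⟨hc.1, hc.2.trans hb.2⟩
  refine ⟨c, ⟨hcu, hgc⟩, fun a ⟨ha, hga⟩ => ?_⟩
  exact hmono.injOn (Ioo_subset_Ico_self ha) (Ioo_subset_Ico_self hcu) (hga.trans hgc.symm)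

namespace Fullerf

/-- `a (a² + 16) f(x, y, a)`. -/
noncomputable def num (x y a : ℝ) : ℝ :=
  a ^ 3 * y + 4 * a ^ 2 * x + 16 * a * y + 64 * x - 2 * a ^ 2 * x ^ 2 + 16 * x * y * a - 32 * y ^ 2
    + a ^ 2 * (a ^ 2 + 16) ^ 2 / 8

noncomputable def numDeriv (x y a : ℝ) : ℝ :=
  3 * a ^ 2 * y + 8 * a * x + 16 * y + 16 * x * y - 4 * a * x ^ 2
    + a * (a ^ 2 + 16) * (3 * a ^ 2 + 16) / 4

theorem fullerf_eq_num_div (x y : ℝ) {a : ℝ} (ha : a ≠ 0) :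
    fullerf x y a = num x y a / (a * (a ^ 2 + 16)) := by
  unfold fullerf num
  field_simp
  ring

theorem hasDerivAt_num (x y a : ℝ) : HasDerivAt (num x y) (numDeriv x y a) a := by
  have h := hasDerivAt_id a
  have H := (((((((h.pow 3).mul_const y).add (((h.pow 2).const_mul 4).mul_const x)).add
    ((h.const_mul 16).mul_const y)).add_const (64 * x)).sub
    (((h.pow 2).const_mul 2).mul_const (x ^ 2))).add (h.const_mul (16 * x * y))).add
    ((((h.pow 2).mul (((h.pow 2).add_const 16).pow 2)).div_const 8).add_const (-(32 * y ^ 2)))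
  refine (H.congr_deriv ?_).congr_of_eventuallyEq (.of_forall fun b => ?_)
  · simp only [numDeriv, id, Pi.pow_apply]; push_cast; ring
  · simp only [num, id, Pi.add_apply, Pi.sub_apply, Pi.mul_apply, Pi.pow_apply]; ring

theorem hasDerivAt_fullerf (x y : ℝ) {a : ℝ} (ha : a ≠ 0) :
    HasDerivAt (fullerf x y)
      ((numDeriv x y a * (a * (a ^ 2 + 16)) - num x y a * (3 * a ^ 2 + 16))
        / (a * (a ^ 2 + 16)) ^ 2) a := by
  have hden : HasDerivAt (fun b : ℝ => b * (b ^ 2 + 16)) (3 * a ^ 2 + 16) a :=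
    ((hasDerivAt_id' a).mul (((hasDerivAt_id' a).pow 2).add_const 16)).congr_deriv
      (by push_cast [Pi.pow_apply]; ring)
  refine ((hasDerivAt_num x y a).div hden (by positivity)).congr_of_eventuallyEq ?_
  filter_upwards [compl_singleton_mem_nhds ha] with b hb
  exact fullerf_eq_num_div x y hb

theorem continuousOn_fullerf (x y : ℝ) : ContinuousOn (fullerf x y) (Iio 0) :=
  fun _ ha => (hasDerivAt_fullerf x y (ne_of_lt ha)).continuousAt.continuousWithinAt

/-- With `D = a (a² + 16)`, the `(x, y)`-free part `D² / 8` of `num` contributes `D² D' / 8 ≥ 0`,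
the constant term is `16 (32 y² - 64 x) > 0`, and for small `(x, y)` these dominate the rest. -/
theorem deriv_num_pos {x y : ℝ} (hs : x ^ 2 + y ^ 2 < 1 / 10000) (hxy : x < 1 / 2 * y ^ 2)
    (a : ℝ) :
    0 < numDeriv x y a * (a * (a ^ 2 + 16)) - num x y a * (3 * a ^ 2 + 16) := by
  have h1 : (0:ℝ) < 1 / 2 * y ^ 2 - x := by linarith
  have h2 : (0:ℝ) ≤ 1 / 10000 - x ^ 2 - y ^ 2 := by linarith
  unfold numDeriv num
  nlinarith [sq_nonneg (x * a ^ 2 - y * a), mul_nonneg (sq_nonneg a) h1.le,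
    mul_nonneg (sq_nonneg (a ^ 2)) h1.le, mul_nonneg (sq_nonneg a) h2,
    mul_nonneg (sq_nonneg (a ^ 2)) h2, sq_nonneg (a ^ 3), sq_nonneg (a ^ 4), sq_nonneg (a * y),
    sq_nonneg (a ^ 2 * y), sq_nonneg (a ^ 2 * x), sq_nonneg a]

theorem strictMonoOn_fullerf {x y : ℝ} (hs : x ^ 2 + y ^ 2 < 1 / 10000)
    (hxy : x < 1 / 2 * y ^ 2) : StrictMonoOn (fullerf x y) (Ico (-1) 0) := by
  apply strictMonoOn_of_deriv_pos (convex_Ico _ _)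
  · exact (continuousOn_fullerf x y).mono Ico_subset_Iio_self
  · rw [interior_Ico]
    intro b hb
    rw [(hasDerivAt_fullerf x y hb.2.ne).deriv]
    exact div_pos (deriv_num_pos hs hxy b) (by have := hb.2.ne; positivity)

theorem fullerf_neg_one_neg {x y : ℝ} (hs : x ^ 2 + y ^ 2 < 1 / 10000) : fullerf x y (-1) < 0 := by
  simp only [fullerf]
  ring_nf
  nlinarith [sq_nonneg (10 * x + 1), sq_nonneg (10 * y - 1), sq_nonneg (x - y)]

theorem eventually_fullerf_pos {x y : ℝ} (hxy : x < 1 / 2 * y ^ 2) :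
    ∀ᶠ a in 𝓝[<] 0, 0 < fullerf x y a := by
  have hnum : ∀ᶠ a in 𝓝 0, num x y a < 0 := by
    refine (hasDerivAt_num x y 0).continuousAt.eventually_lt continuousAt_const ?_
    simp only [num]
    linarith
  filter_upwards [hnum.filter_mono nhdsWithin_le_nhds, self_mem_nhdsWithin]
    with a hna (ha : a < 0)
  rw [fullerf_eq_num_div x y ha.ne]
  exact div_pos_of_neg_of_neg hna (mul_neg_of_neg_of_pos ha (by positivity))

end Fullerf

open Fullerf in
/-- Existence and uniqueness of the implicit level `a` with `f(x,y,a) = 0`. -/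
theorem fullerf_implicit_exists_unique :
    ∃ abar > (0:ℝ), ∃ r > (0:ℝ), ∀ x y : ℝ,
      0 < Real.sqrt (x ^ 2 + y ^ 2) → Real.sqrt (x ^ 2 + y ^ 2) < r →
      x < (1 / 2) * y ^ 2 →
        ∃! a : ℝ, a ∈ Set.Ioo (-abar) 0 ∧ fullerf x y a = 0 := by
  refine ⟨1, one_pos, 1 / 100, by norm_num, fun x y _ hr hxy => ?_⟩
  have hs : x ^ 2 + y ^ 2 < 1 / 10000 := by
    rw [Real.sqrt_lt' (by norm_num)] at hr
    linarith
  exact existsUnique_mem_Ioo_eq_zero (by norm_num)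
    ((continuousOn_fullerf x y).mono Ico_subset_Iio_self) (strictMonoOn_fullerf hs hxy)
    (fullerf_neg_one_neg hs) (eventually_fullerf_pos hxy)
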